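/- arXiv:2404.16956 — 4 statements merged into one kernel-verified Lean document; each statement's English description precedes it below -/
import Mathlib

section
/- For any set A ⊆ R^d and ε ≥ 0: ((A^{-ε})^ε)^{-ε} = A^{-ε}. -/
open Metric Pointwise

def epsExp {d : ℕ} (ε : ℝ) (A : Set (EuclideanSpace ℝ (Fin d))) :
    Set (EuclideanSpace ℝ (Fin d)) :=
  A + closedBall (0 : EuclideanSpace ℝ (Fin d)) ε

def epsShrink {d : ℕ} (ε : ℝ) (A : Set (EuclideanSpace ℝ (Fin d))) :
    Set (EuclideanSpace ℝ (Fin d)) :=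
  (epsExp ε Aᶜ)ᶜ

lemma epsExp_mono {d : ℕ} (ε : ℝ) {X Y : Set (EuclideanSpace ℝ (Fin d))} (h : X ⊆ Y) :
    epsExp ε X ⊆ epsExp ε Y :=
  Set.add_subset_add_right h

lemma epsShrink_mono {d : ℕ} (ε : ℝ) {X Y : Set (EuclideanSpace ℝ (Fin d))} (h : X ⊆ Y) :
    epsShrink ε X ⊆ epsShrink ε Y :=
  Set.compl_subset_compl.mpr (epsExp_mono ε (Set.compl_subset_compl.mpr h))

lemma epsExp_epsShrink_subset {d : ℕ} (ε : ℝ) (X : Set (EuclideanSpace ℝ (Fin d))) :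
    epsExp ε (epsShrink ε X) ⊆ X := by
  rintro x ⟨a, ha, h, hh, rfl⟩
  by_contra hx
  exact ha ⟨a + h, hx, -h, by simpa using (by simpa [dist_eq_norm] using hh : ‖h‖ ≤ ε), by module⟩

lemma subset_epsShrink_epsExp {d : ℕ} (ε : ℝ) (X : Set (EuclideanSpace ℝ (Fin d))) :
    X ⊆ epsShrink ε (epsExp ε X) := by
  intro x hx
  rintro ⟨a, ha, h, hh, heq⟩
  refine ha ⟨x, hx, -h, by simpa using (by simpa [dist_eq_norm] using hh : ‖h‖ ≤ ε), ?_⟩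
  rw [← heq]; module

theorem epsShrink_epsExp_epsShrink {d : ℕ} (A : Set (EuclideanSpace ℝ (Fin d))) (ε : ℝ)
    (hε : 0 ≤ ε) :
    epsShrink ε (epsExp ε (epsShrink ε A)) = epsShrink ε A := by
  apply Set.Subset.antisymm
  · exact epsShrink_mono ε (epsExp_epsShrink_subset ε A)
  · exact subset_epsShrink_epsExp ε (epsShrink ε A)
end

section
/- The adversarial classification risk is subadditive: for any Borel sets S_1, S_2 ⊆ R^d, R^ε(S_1 ∩ S_2) + R^ε(S_1 ∪ S_2) ≤ R^ε(S_1) + R^ε(S_2). -/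
open Metric MeasureTheory Pointwise

/-- The adversarial classification risk `R^ε(A) = P₁((A^C)^ε) + P₀(A^ε)`. -/
noncomputable def advRisk {d : ℕ} (P₀ P₁ : Measure (EuclideanSpace ℝ (Fin d)))
    (ε : ℝ) (A : Set (EuclideanSpace ℝ (Fin d))) : ENNReal :=
  P₁ (epsExp ε Aᶜ) + P₀ (epsExp ε A)

lemma meas_submod {α : Type*} [MeasurableSpace α] (μ : Measure α) (A B : Set α) :
    μ (A ∩ B) + μ (A ∪ B) ≤ μ A + μ B := by
  obtain ⟨tA, hAt, htmA, htA⟩ := exists_measurable_superset μ A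
  obtain ⟨tB, hBt, htmB, htB⟩ := exists_measurable_superset μ B
  calc μ (A ∩ B) + μ (A ∪ B)
      ≤ μ (tA ∩ tB) + μ (tA ∪ tB) :=
        add_le_add (measure_mono (Set.inter_subset_inter hAt hBt))
          (measure_mono (Set.union_subset_union hAt hBt))
    _ = μ tA + μ tB := by rw [add_comm, measure_union_add_inter tA htmB]
    _ = μ A + μ B := by rw [htA, htB]

lemma epsExp_union {d : ℕ} (ε : ℝ) (A B : Set (EuclideanSpace ℝ (Fin d))) :
    epsExp ε (A ∪ B) = epsExp ε A ∪ epsExp ε B :=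
  Set.union_add ..

lemma epsExp_inter_subset {d : ℕ} (ε : ℝ) (A B : Set (EuclideanSpace ℝ (Fin d))) :
    epsExp ε (A ∩ B) ⊆ epsExp ε A ∩ epsExp ε B :=
  Set.add_subset_iff.2 fun x hx y hy =>
    ⟨Set.add_mem_add hx.1 hy, Set.add_mem_add hx.2 hy⟩

lemma key {d : ℕ} (μ : Measure (EuclideanSpace ℝ (Fin d))) (ε : ℝ)
    (A B : Set (EuclideanSpace ℝ (Fin d))) :
    μ (epsExp ε (A ∩ B)) + μ (epsExp ε (A ∪ B)) ≤ μ (epsExp ε A) + μ (epsExp ε B) :=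
  calc μ (epsExp ε (A ∩ B)) + μ (epsExp ε (A ∪ B))
      ≤ μ (epsExp ε A ∩ epsExp ε B) + μ (epsExp ε A ∪ epsExp ε B) := by
        refine add_le_add (measure_mono (epsExp_inter_subset ..)) ?_
        rw [epsExp_union]
    _ ≤ μ (epsExp ε A) + μ (epsExp ε B) := meas_submod μ _ _

theorem advRisk_subadditive {d : ℕ} (P₀ P₁ : Measure (EuclideanSpace ℝ (Fin d)))
    [IsFiniteMeasure P₀] [IsFiniteMeasure P₁] (ε : ℝ) (hε : 0 ≤ ε)
    (S₁ S₂ : Set (EuclideanSpace ℝ (Fin d)))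
    (hS₁ : MeasurableSet S₁) (hS₂ : MeasurableSet S₂) :
    advRisk P₀ P₁ ε (S₁ ∩ S₂) + advRisk P₀ P₁ ε (S₁ ∪ S₂) ≤
      advRisk P₀ P₁ ε S₁ + advRisk P₀ P₁ ε S₂ := by
  unfold advRisk
  rw [Set.compl_inter, Set.compl_union]
  have h0 := key P₀ ε S₁ S₂
  have h1 := key P₁ ε S₁ᶜ S₂ᶜ
  calc P₁ (epsExp ε (S₁ᶜ ∪ S₂ᶜ)) + P₀ (epsExp ε (S₁ ∩ S₂)) +
        (P₁ (epsExp ε (S₁ᶜ ∩ S₂ᶜ)) + P₀ (epsExp ε (S₁ ∪ S₂)))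
      = (P₁ (epsExp ε (S₁ᶜ ∩ S₂ᶜ)) + P₁ (epsExp ε (S₁ᶜ ∪ S₂ᶜ))) +
        (P₀ (epsExp ε (S₁ ∩ S₂)) + P₀ (epsExp ε (S₁ ∪ S₂))) := by ring
    _ ≤ (P₁ (epsExp ε S₁ᶜ) + P₁ (epsExp ε S₂ᶜ)) +
        (P₀ (epsExp ε S₁) + P₀ (epsExp ε S₂)) := add_le_add h1 h0
    _ = P₁ (epsExp ε S₁ᶜ) + P₀ (epsExp ε S₁) + (P₁ (epsExp ε S₂ᶜ) + P₀ (epsExp ε S₂)) := by ring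
end

section
/- Let p_0, p_1 be continuous probability density functions on R that are bounded above by K, and let B = ∪_{i=1}^M (c_i, d_i) and A = ∪_{i=1}^M (a_i, b_i) be finite disjoint unions of intervals with |a_i − c_i| ≤ ε and |b_i − d_i| ≤ ε for all i. Then R(A) − R(B) ≤ 2εMK, where R(E) = ∫_{E^C} p_1 dx + ∫_E p_0 dx. -/
/-!
`R(A) - R(B) = ∫_{A \ B} (p₀ - p₁) + ∫_{B \ A} (p₁ - p₀) ≤ K · |A ∆ B|`, since the densities are
nonnegative and bounded by `K`. A point of `A ∆ B` lies in some `(aᵢ, bᵢ) ∆ (cᵢ, dᵢ)`, hence between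
`aᵢ` and `cᵢ` or between `bᵢ` and `dᵢ`, so `|A ∆ B| ≤ ∑ᵢ (|aᵢ - cᵢ| + |bᵢ - dᵢ|) ≤ 2εM`.
-/

open MeasureTheory Set
open scoped symmDiff

section Risk

variable {α : Type*} [MeasurableSpace α] {μ : Measure α}

noncomputable def risk (μ : Measure α) (p₀ p₁ : α → ℝ) (E : Set α) : ℝ :=
  (∫ x in Eᶜ, p₁ x ∂μ) + ∫ x in E, p₀ x ∂μ

theorem setIntegral_sub_setIntegral {f : α → ℝ} {s t : Set α} (hf : Integrable f μ)
    (hs : MeasurableSet s) (ht : MeasurableSet t) :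
    ∫ x in s, f x ∂μ - ∫ x in t, f x ∂μ = ∫ x in s \ t, f x ∂μ - ∫ x in t \ s, f x ∂μ := by
  have hs' := integral_inter_add_sdiff ht hf.integrableOn (s := s)
  have ht' := integral_inter_add_sdiff hs hf.integrableOn (s := t)
  rw [inter_comm] at ht'
  linarith

theorem setIntegral_le_mul_measureReal {f : α → ℝ} {s : Set α} {K : ℝ} (hs : μ s < ⊤)
    (hf₀ : ∀ x ∈ s, 0 ≤ f x) (hfK : ∀ x ∈ s, f x ≤ K) :
    ∫ x in s, f x ∂μ ≤ K * μ.real s :=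
  (le_abs_self _).trans <| norm_setIntegral_le_of_norm_le_const hs fun x hx => by
    rw [Real.norm_of_nonneg (hf₀ x hx)]; exact hfK x hx

theorem risk_sub_risk_le {p₀ p₁ : α → ℝ} {A B : Set α} {K : ℝ}
    (hA : MeasurableSet A) (hB : MeasurableSet B) (hint₀ : Integrable p₀ μ)
    (hint₁ : Integrable p₁ μ) (h₀nn : ∀ x, 0 ≤ p₀ x) (h₁nn : ∀ x, 0 ≤ p₁ x)
    (h₀K : ∀ x, p₀ x ≤ K) (h₁K : ∀ x, p₁ x ≤ K) (hAB : μ (A ∆ B) ≠ ⊤) :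
    risk μ p₀ p₁ A - risk μ p₀ p₁ B ≤ K * μ.real (A ∆ B) := by
  have hAB' : μ (A \ B) ≠ ⊤ := measure_ne_top_of_subset subset_union_left hAB
  have hBA' : μ (B \ A) ≠ ⊤ := measure_ne_top_of_subset subset_union_right hAB
  have h₁ := setIntegral_sub_setIntegral hint₁ hA.compl hB.compl
  have h₀ := setIntegral_sub_setIntegral hint₀ hA hB
  rw [compl_sdiff_compl, compl_sdiff_compl] at h₁
  have hsplit : μ.real (A ∆ B) = μ.real (A \ B) + μ.real (B \ A) :=
    measureReal_union disjoint_sdiff_sdiff (hB.diff hA) hAB' hBA'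
  have hA₀ := setIntegral_le_mul_measureReal hAB'.lt_top (fun x _ => h₀nn x) fun x _ => h₀K x
  have hB₁ := setIntegral_le_mul_measureReal hBA'.lt_top (fun x _ => h₁nn x) fun x _ => h₁K x
  have hB₀ : 0 ≤ ∫ x in B \ A, p₀ x ∂μ := setIntegral_nonneg (hB.diff hA) fun x _ => h₀nn x
  have hA₁ : 0 ≤ ∫ x in A \ B, p₁ x ∂μ := setIntegral_nonneg (hA.diff hB) fun x _ => h₁nn x
  unfold risk
  rw [hsplit]
  linarith

end Risk

theorem Ioo_diff_Ioo_subset_uIcc_union_uIcc (a b c d : ℝ) :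
    Ioo a b \ Ioo c d ⊆ uIcc a c ∪ uIcc b d := by
  rintro x ⟨⟨hax, hxb⟩, hxcd⟩
  rcases not_and_or.mp hxcd with hcx | hxd
  · exact Or.inl ⟨min_le_left _ _ |>.trans hax.le, (not_lt.mp hcx).trans (le_max_right _ _)⟩
  · exact Or.inr ⟨min_le_right _ _ |>.trans (not_lt.mp hxd), hxb.le.trans (le_max_left _ _)⟩

theorem iUnion_Ioo_symmDiff_subset {ι : Type*} (a b c d : ι → ℝ) :
    (⋃ i, Ioo (a i) (b i)) ∆ (⋃ i, Ioo (c i) (d i)) ⊆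
      ⋃ i, uIcc (a i) (c i) ∪ uIcc (b i) (d i) := by
  rintro x (⟨hx, hx'⟩ | ⟨hx, hx'⟩) <;> obtain ⟨i, hi⟩ := mem_iUnion.mp hx <;>
    refine mem_iUnion.mpr ⟨i, ?_⟩
  · exact Ioo_diff_Ioo_subset_uIcc_union_uIcc _ _ _ _ ⟨hi, fun h => hx' (mem_iUnion_of_mem i h)⟩
  · rw [uIcc_comm (a i), uIcc_comm (b i)]
    exact Ioo_diff_Ioo_subset_uIcc_union_uIcc _ _ _ _ ⟨hi, fun h => hx' (mem_iUnion_of_mem i h)⟩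

theorem volume_iUnion_uIcc_union_uIcc_ne_top {ι : Type*} [Finite ι] (a b c d : ι → ℝ) :
    volume (⋃ i, uIcc (a i) (c i) ∪ uIcc (b i) (d i)) ≠ ⊤ :=
  (isCompact_iUnion fun _ => isCompact_uIcc.union isCompact_uIcc).measure_ne_top

theorem volume_real_iUnion_uIcc_union_uIcc_le {ι : Type*} [Fintype ι] (a b c d : ι → ℝ) :
    volume.real (⋃ i, uIcc (a i) (c i) ∪ uIcc (b i) (d i)) ≤
      ∑ i, (|a i - c i| + |b i - d i|) := by
  refine (measureReal_iUnion_fintype_le _).trans (Finset.sum_le_sum fun i _ => ?_)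
  refine (measureReal_union_le _ _).trans_eq ?_
  rw [Real.volume_real_interval, Real.volume_real_interval, abs_sub_comm (c i), abs_sub_comm (d i)]

theorem risk_diff_le_general (p₀ p₁ : ℝ → ℝ) (K ε : ℝ)
    (h₀nn : ∀ x, 0 ≤ p₀ x) (h₁nn : ∀ x, 0 ≤ p₁ x)
    (h₀K : ∀ x, p₀ x ≤ K) (h₁K : ∀ x, p₁ x ≤ K)
    (hint₀ : Integrable p₀) (hint₁ : Integrable p₁)
    (M : ℕ) (a b c e : Fin M → ℝ)
    (hac : ∀ i, |a i - c i| ≤ ε) (hbd : ∀ i, |b i - e i| ≤ ε) :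
    ((∫ x in (⋃ i, Set.Ioo (a i) (b i))ᶜ, p₁ x) +
        ∫ x in ⋃ i, Set.Ioo (a i) (b i), p₀ x) -
      ((∫ x in (⋃ i, Set.Ioo (c i) (e i))ᶜ, p₁ x) +
        ∫ x in ⋃ i, Set.Ioo (c i) (e i), p₀ x) ≤
      2 * ε * M * K := by
  have hK : 0 ≤ K := (h₀nn 0).trans (h₀K 0)
  have hcover := iUnion_Ioo_symmDiff_subset a b c e
  have hfin := volume_iUnion_uIcc_union_uIcc_ne_top a b c e
  calc risk volume p₀ p₁ (⋃ i, Ioo (a i) (b i)) - risk volume p₀ p₁ (⋃ i, Ioo (c i) (e i))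
      _ ≤ K * volume.real ((⋃ i, Ioo (a i) (b i)) ∆ (⋃ i, Ioo (c i) (e i))) :=
        risk_sub_risk_le (.iUnion fun _ => measurableSet_Ioo) (.iUnion fun _ => measurableSet_Ioo)
          hint₀ hint₁ h₀nn h₁nn h₀K h₁K (measure_ne_top_of_subset hcover hfin)
      _ ≤ K * ∑ i, (|a i - c i| + |b i - e i|) := by
        gcongr
        exact (measureReal_mono hcover hfin).trans (volume_real_iUnion_uIcc_union_uIcc_le a b c e)
      _ ≤ K * ∑ _i : Fin M, (ε + ε) := by gcongr with i; exacts [hac i, hbd i]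
      _ = 2 * ε * M * K := by
        simp only [Finset.sum_const, Finset.card_univ, Fintype.card_fin, nsmul_eq_mul]
        ring

theorem risk_diff_le (p₀ p₁ : ℝ → ℝ) (K ε : ℝ) (hε : 0 ≤ ε)
    (hc₀ : Continuous p₀) (hc₁ : Continuous p₁)
    (h₀nn : ∀ x, 0 ≤ p₀ x) (h₁nn : ∀ x, 0 ≤ p₁ x)
    (h₀K : ∀ x, p₀ x ≤ K) (h₁K : ∀ x, p₁ x ≤ K)
    (hint₀ : Integrable p₀) (hint₁ : Integrable p₁)
    (hprob₀ : ∫ x, p₀ x = 1) (hprob₁ : ∫ x, p₁ x = 1)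
    (M : ℕ) (a b c e : Fin M → ℝ)
    (hAdisj : Pairwise (Function.onFun Disjoint fun i => Set.Ioo (a i) (b i)))
    (hBdisj : Pairwise (Function.onFun Disjoint fun i => Set.Ioo (c i) (e i)))
    (hac : ∀ i, |a i - c i| ≤ ε) (hbd : ∀ i, |b i - e i| ≤ ε) :
    ((∫ x in (⋃ i, Set.Ioo (a i) (b i))ᶜ, p₁ x) +
        ∫ x in ⋃ i, Set.Ioo (a i) (b i), p₀ x) -
      ((∫ x in (⋃ i, Set.Ioo (c i) (e i))ᶜ, p₁ x) +
        ∫ x in ⋃ i, Set.Ioo (c i) (e i), p₀ x) ≤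
      2 * ε * M * K :=
  risk_diff_le_general p₀ p₁ K ε h₀nn h₁nn h₀K h₁K hint₀ hint₁ M a b c e hac hbd
end

section
/- Let p_0, p_1 : R → R be continuous on [z−r, z+r] with p_1(z) = p_0(z), and suppose p_1 is non-increasing and p_0 is non-decreasing on [z−r, z+r]. Then for all 0 < ε ≤ r/2 there exists a point a ∈ [z−ε, z+ε] with p_1(a+ε) = p_0(a−ε). -/
/-! At `a = z + ε` the left side `p₁ (z + 2ε)` is at most `p₁ z = p₀ z`, the right side, and at
`a = z - ε` the inequality is reversed by the monotonicity of `p₀`; the intermediate value theorem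
for the two continuous functions `a ↦ p₁ (a + ε)` and `a ↦ p₀ (a - ε)` gives a crossing point. -/

open Set

theorem exists_map_add_eq_map_sub {p₀ p₁ : ℝ → ℝ} {z ε : ℝ} (hε : 0 ≤ ε)
    (hc₀ : ContinuousOn p₀ (Icc (z - 2 * ε) z)) (hc₁ : ContinuousOn p₁ (Icc z (z + 2 * ε)))
    (h₀ : p₀ (z - 2 * ε) ≤ p₀ z) (h₁ : p₁ (z + 2 * ε) ≤ p₁ z) (heq : p₁ z = p₀ z) :
    ∃ a ∈ Icc (z - ε) (z + ε), p₁ (a + ε) = p₀ (a - ε) := by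
  have hcf : ContinuousOn (fun a ↦ p₁ (a + ε)) (Icc (z - ε) (z + ε)) :=
    hc₁.comp (continuous_add_const ε).continuousOn fun a ha ↦
      ⟨by linarith [ha.1], by linarith [ha.2]⟩
  have hcg : ContinuousOn (fun a ↦ p₀ (a - ε)) (Icc (z - ε) (z + ε)) :=
    hc₀.comp (continuous_sub_right ε).continuousOn fun a ha ↦
      ⟨by linarith [ha.1], by linarith [ha.2]⟩
  have hleft : p₀ (z - ε - ε) ≤ p₁ (z - ε + ε) := by
    rw [sub_add_cancel, heq, sub_sub, ← two_mul]
    exact h₀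
  have hright : p₁ (z + ε + ε) ≤ p₀ (z + ε - ε) := by
    rw [add_sub_cancel_right, ← heq, add_assoc, ← two_mul]
    exact h₁
  exact isPreconnected_Icc.intermediate_value₂ (right_mem_Icc.2 (by linarith))
    (left_mem_Icc.2 (by linarith)) hcf hcg hright hleft

theorem exists_solution_near_general (p₀ p₁ : ℝ → ℝ) (z r : ℝ)
    (hc₀ : ContinuousOn p₀ (Set.Icc (z - r) (z + r)))
    (hc₁ : ContinuousOn p₁ (Set.Icc (z - r) (z + r)))
    (heq : p₁ z = p₀ z)
    (h₁anti : AntitoneOn p₁ (Set.Icc (z - r) (z + r)))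
    (h₀mono : MonotoneOn p₀ (Set.Icc (z - r) (z + r)))
    (ε : ℝ) (hε : 0 < ε) (hεr : ε ≤ r / 2) :
    ∃ a ∈ Set.Icc (z - ε) (z + ε), p₁ (a + ε) = p₀ (a - ε) := by
  have hlow : z - 2 * ε ∈ Icc (z - r) (z + r) := ⟨by linarith, by linarith⟩
  have hmid : z ∈ Icc (z - r) (z + r) := ⟨by linarith, by linarith⟩
  have hhigh : z + 2 * ε ∈ Icc (z - r) (z + r) := ⟨by linarith, by linarith⟩
  exact exists_map_add_eq_map_sub hε.le
    (hc₀.mono (Icc_subset_Icc (by linarith) (by linarith)))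
    (hc₁.mono (Icc_subset_Icc (by linarith) (by linarith)))
    (h₀mono hlow hmid (by linarith)) (h₁anti hmid hhigh (by linarith)) heq

theorem exists_solution_near (p₀ p₁ : ℝ → ℝ) (z r : ℝ) (hr : 0 < r)
    (hc₀ : ContinuousOn p₀ (Set.Icc (z - r) (z + r)))
    (hc₁ : ContinuousOn p₁ (Set.Icc (z - r) (z + r)))
    (heq : p₁ z = p₀ z)
    (h₁anti : AntitoneOn p₁ (Set.Icc (z - r) (z + r)))
    (h₀mono : MonotoneOn p₀ (Set.Icc (z - r) (z + r)))
    (ε : ℝ) (hε : 0 < ε) (hεr : ε ≤ r / 2) :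
    ∃ a ∈ Set.Icc (z - ε) (z + ε), p₁ (a + ε) = p₀ (a - ε) :=
  exists_solution_near_general p₀ p₁ z r hc₀ hc₁ heq h₁anti h₀mono ε hε hεr
end
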